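/- arXiv:2504.12707 — 4 statements merged into one kernel-verified Lean document; each statement's English description precedes it below -/
import Mathlib

section
/- Let H be a finitely generated group with a surjection π from the free group on a finite set Y onto H, equipped with a computable left order ≤, and let φ : G → H be an injective homomorphism from a countable group G such that the membership problem for φ(G) in H is decidable. Then there is an enumerated generating sequence x : ℕ → G of G such that the left-invariant linear order on G obtained by pulling back ≤ along φ (i.e., a <_G b iff φ(a) < φ(b)) is computable with respect to x. -/
-- The sign (−1, 0, or 1) of a group element relative to the identity,
-- with respect to a linear order `l`.
open Classical in
noncomputable def orderSign {H : Type*} [Group H] (l : LinearOrder H) (h : H) : ℤ :=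
  if l.lt h 1 then -1 else if h = 1 then 0 else 1

/-- A group is left-orderable if it carries a left-invariant linear order. -/
def IsLeftOrderable (G : Type*) [Group G] : Prop :=
  ∃ l : LinearOrder G, ∀ a b c : G, l.le b c → l.le (a * b) (a * c)

/-- A Frattini embedding: an injective homomorphism preserving and reflecting conjugacy. -/
def IsFrattini {G H : Type*} [Group G] [Group H] (φ : G →* H) : Prop :=
  Function.Injective φ ∧ ∀ a b : G, IsConj a b ↔ IsConj (φ a) (φ b)

/-- `X` is a (finite) generating set of the group. -/
def Generates {G : Type*} [Group G] (X : Finset G) : Prop :=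
  Subgroup.closure (X : Set G) = ⊤

/-- Word length of `g` with respect to the finite set `X`: the least length of a word
over `X ∪ X⁻¹` representing `g`. -/
noncomputable def wordLength {G : Type*} [Group G] (X : Finset G) (g : G) : ℕ :=
  sInf {n | ∃ w : List G, w.length = n ∧ (∀ a ∈ w, a ∈ X ∨ a⁻¹ ∈ X) ∧ w.prod = g}

/-- Quasi-isometric embedding with respect to finite generating sets `X` and `Y`. -/
noncomputable def IsQIEmbedding {G H : Type*} [Group G] [Group H]
    (X : Finset G) (Y : Finset H) (φ : G →* H) : Prop :=
  Function.Injective φ ∧ ∃ C k : ℝ, 0 < C ∧ 0 < k ∧ ∀ g : G,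
    (1 / C) * (wordLength X g : ℝ) - k ≤ (wordLength Y (φ g) : ℝ) ∧
    (wordLength Y (φ g) : ℝ) ≤ C * (wordLength X g : ℝ) + k

/-- Evaluation of a formal word (list of pairs (index, sign)) over the
enumerated sequence `x : ℕ → G`. -/
def evalWord {G : Type*} [Group G] (x : ℕ → G) (w : List (ℕ × Bool)) : G :=
  (w.map (fun p => if p.2 then x p.1 else (x p.1)⁻¹)).prod

/-- A computable left order on a countable group with respect to an enumerated
generating sequence `x : ℕ → G`. -/
def ComputableLeftOrderWrt {G : Type*} [Group G] (x : ℕ → G) : Prop :=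
  ∃ l : LinearOrder G, (∀ a b c : G, l.le b c → l.le (a * b) (a * c)) ∧
    Computable (fun w : List (ℕ × Bool) => orderSign l (evalWord x w))

/-- A computable left order on a finitely generated group, presented by
a surjection `π` from a free group of finite rank. -/
def ComputableLeftOrderVia {H : Type*} [Group H] {m : ℕ}
    (π : FreeGroup (Fin m) →* H) : Prop :=
  ∃ l : LinearOrder H, (∀ a b c : H, l.le b c → l.le (a * b) (a * c)) ∧
    Computable (fun w : List (Fin m × Bool) => orderSign l (π (FreeGroup.mk w)))

/-- The embedding `φ` is computable: one can compute, for each `i`, a word over the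
generators of `H` representing `φ (x i)`. -/
def ComputableEmbedding {G H : Type*} [Group G] [Group H] (x : ℕ → G) {m : ℕ}
    (π : FreeGroup (Fin m) →* H) (φ : G →* H) : Prop :=
  ∃ f : ℕ → List (Fin m × Bool), Computable f ∧ ∀ i, π (FreeGroup.mk (f i)) = φ (x i)

/-- Decidable membership problem for the image of `φ` in `H`, presented via `π`. -/
def DecidableMembership {G H : Type*} [Group G] [Group H] {m : ℕ}
    (π : FreeGroup (Fin m) →* H) (φ : G →* H) : Prop :=
  ComputablePred (fun w : List (Fin m × Bool) => π (FreeGroup.mk w) ∈ φ.range)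

/-- Decidable word problem for `H`, presented via `π`. -/
def DecidableWordProblemVia {H : Type*} [Group H] {m : ℕ}
    (π : FreeGroup (Fin m) →* H) : Prop :=
  ComputablePred (fun w : List (Fin m × Bool) => π (FreeGroup.mk w) = 1)

/-- A group is finitely presented: quotient of a finite-rank free group by the
normal closure of finitely many relators. -/
def IsFinitelyPresented (K : Type*) [Group K] : Prop :=
  ∃ (m : ℕ) (π : FreeGroup (Fin m) →* K) (R : Finset (FreeGroup (Fin m))),
    Function.Surjective π ∧ π.ker = Subgroup.normalClosure (R : Set (FreeGroup (Fin m)))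

/-!
Because `φ` is injective, `G` can be enumerated through words of `H`: decode `n` to a word and
keep it if the membership test puts it in `φ(G)`, falling back to the empty word. This gives a
computable sequence of words `u n` and a surjection `x : ℕ → G` with `φ (x n) = π (u n)`.
Substituting `u i` for the letter `i` translates words over the `x i` computably into words over
the generators of `H` without changing their value under `φ`, so the sign of the pulled-back
order is computed by the sign function of `≤`.
-/

open Encodable

section Computability

variable {α β σ : Type*} [Primcodable α] [Primcodable β] [Primcodable σ]

theorem Computable.list_map {f : α → List β} {g : α → β → σ} (hf : Computable f)
    (hg : Computable₂ g) : Computable fun a => (f a).map (g a) := by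
  have hrec : Computable fun a => Nat.rec (motive := fun _ => List σ) []
      (fun n acc => acc ++ (((f a)[n]?).map (g a)).toList) (f a).length :=
    Computable.nat_rec (Computable.list_length.comp hf) (Computable.const [])
      (Computable.list_append.comp (Computable.snd.comp Computable.snd)
        (Primrec.optionToList.to_comp.comp (Computable.option_map
          (Computable.list_getElem?.comp (hf.comp Computable.fst)
            (Computable.fst.comp Computable.snd))
          (hg.comp (Computable.fst.comp Computable.fst) Computable.snd).to₂))).to₂
  refine hrec.of_eq fun a => ?_
  suffices ∀ n, Nat.rec (motive := fun _ => List σ) []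
      (fun n acc => acc ++ (((f a)[n]?).map (g a)).toList) n = ((f a).take n).map (g a) by
    rw [this, List.take_length]
  intro n
  induction n with
  | zero => rfl
  | succ n ih => rw [List.take_add_one, List.map_append, ← ih, ← Option.toList_map]

theorem Primrec.freeGroup_invRev : Primrec (@FreeGroup.invRev α) :=
  (Primrec.list_reverse.comp (Primrec.list_map Primrec.id
    ((Primrec.fst.comp Primrec.snd).pair
      ((Primrec.dom_bool not).comp (Primrec.snd.comp Primrec.snd))).to₂)).of_eq
    fun _ => rfl

-- Enumerates `{b | p b} ∪ {d}`.
def enumerateFilter (p : β → Bool) (d : β) (n : ℕ) : β :=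
  let b := (decode n).getD d
  cond (p b) b d

variable (p : β → Bool) (d : β)

theorem Computable.enumerateFilter (hp : Computable p) : Computable (enumerateFilter p d) :=
  let hdecode := Computable.option_getD Computable.decode (Computable.const d)
  Computable.cond (hp.comp hdecode) hdecode (Computable.const d)

theorem enumerateFilter_eq_or (n : ℕ) :
    p (enumerateFilter p d n) = true ∨ enumerateFilter p d n = d := by
  unfold enumerateFilter
  cases h : p ((decode n).getD d) <;> simp [h]

theorem enumerateFilter_encode {b : β} (hb : p b = true) : enumerateFilter p d (encode b) = b := by
  simp [enumerateFilter, encodek, hb]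

end Computability

section Substitution

variable {ι α : Type*}

def substWord (u : ι → List (α × Bool)) (w : List (ι × Bool)) : List (α × Bool) :=
  (w.map fun p => cond p.2 (u p.1) (FreeGroup.invRev (u p.1))).flatten

theorem FreeGroup.mk_substWord (u : ι → List (α × Bool)) (w : List (ι × Bool)) :
    FreeGroup.mk (substWord u w) =
      FreeGroup.lift (fun i => FreeGroup.mk (u i)) (FreeGroup.mk w) := by
  induction w with
  | nil => rfl
  | cons p w ih =>
    obtain ⟨i, _ | _⟩ := p <;>
      simp_all [substWord, ← FreeGroup.mul_mk, FreeGroup.inv_mk]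

theorem Computable.substWord [Primcodable ι] [Primcodable α] {u : ι → List (α × Bool)}
    (hu : Computable u) : Computable (substWord u) :=
  have hletter := hu.comp (Computable.fst.comp Computable.snd)
  Primrec.list_flatten.to_comp.comp (Computable.list_map Computable.id
    (Computable.cond (Computable.snd.comp Computable.snd) hletter
      (Primrec.freeGroup_invRev.to_comp.comp hletter)).to₂)

theorem evalWord_eq_lift {G : Type*} [Group G] (x : ℕ → G) (w : List (ℕ × Bool)) :
    evalWord x w = FreeGroup.lift x (FreeGroup.mk w) := by
  simp only [evalWord, FreeGroup.lift_mk, Bool.cond_eq_ite]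

theorem map_evalWord_eq {G H : Type*} [Group G] [Group H] {π : FreeGroup α →* H} {ψ : G →* H}
    {x : ℕ → G} {u : ℕ → List (α × Bool)} (hu : ∀ i, ψ (x i) = π (FreeGroup.mk (u i)))
    (w : List (ℕ × Bool)) : ψ (evalWord x w) = π (FreeGroup.mk (substWord u w)) := by
  have hcomp : ψ.comp (FreeGroup.lift x) = π.comp (FreeGroup.lift fun i => FreeGroup.mk (u i)) :=
    FreeGroup.ext_hom _ _ fun i => by simp [hu]
  rw [evalWord_eq_lift, FreeGroup.mk_substWord, ← MonoidHom.comp_apply, hcomp,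
    MonoidHom.comp_apply]

end Substitution

theorem orderSign_lift' {G H : Type*} [Group G] [Group H] (l : LinearOrder H) (φ : G →* H)
    (hφ : Function.Injective φ) (g : G) :
    orderSign (@LinearOrder.lift' G H l φ hφ) g = orderSign l (φ g) := by
  have hlt : (@LinearOrder.lift' G H l φ hφ).lt g 1 ↔ l.lt (φ g) 1 := by
    rw [← map_one φ]; exact Iff.rfl
  simp only [orderSign, hlt, ← map_eq_one_iff φ hφ]

theorem DecidableMembership.exists_computable_enumeration {H G : Type*} [Group H] [Group G]
    {m : ℕ} {π : FreeGroup (Fin m) →* H} {φ : G →* H} (hmem : DecidableMembership π φ)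
    (hπ : Function.Surjective π) (hφ : Function.Injective φ) :
    ∃ u : ℕ → List (Fin m × Bool), Computable u ∧ ∃ x : ℕ → G, Function.Surjective x ∧
      ∀ n, φ (x n) = π (FreeGroup.mk (u n)) := by
  obtain ⟨p, hp, hpmem⟩ := ComputablePred.computable_iff.1 hmem
  have hp_iff (w) : p w = true ↔ π (FreeGroup.mk w) ∈ φ.range :=
    (Iff.of_eq (congrFun hpmem w)).symm
  have hu_mem (n) : π (FreeGroup.mk (enumerateFilter p [] n)) ∈ φ.range :=
    (enumerateFilter_eq_or p [] n).elim (hp_iff _).1 fun h => by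
      rw [h, ← FreeGroup.one_eq_mk, map_one]; exact one_mem _
  let x (n : ℕ) : G := (MonoidHom.ofInjective hφ).symm ⟨_, hu_mem n⟩
  have hx (n) : φ (x n) = π (FreeGroup.mk (enumerateFilter p [] n)) :=
    MonoidHom.apply_ofInjective_symm hφ _
  have hx_surj : Function.Surjective x := fun g => by
    obtain ⟨a, ha⟩ := hπ (φ g)
    have hword : p a.toWord = true := by
      rw [hp_iff, FreeGroup.mk_toWord, ha]; exact ⟨g, rfl⟩
    refine ⟨encode a.toWord, hφ ?_⟩
    rw [hx, enumerateFilter_encode p [] hword, FreeGroup.mk_toWord, ha]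
  exact ⟨_, Computable.enumerateFilter p [] hp, x, hx_surj, hx⟩

theorem pullback_order_computable_of_decidable_membership_general
    (H : Type) [Group H] (m : ℕ) (π : FreeGroup (Fin m) →* H)
    (hπ : Function.Surjective π) (l : LinearOrder H)
    (hlc : Computable (fun w : List (Fin m × Bool) => orderSign l (π (FreeGroup.mk w))))
    (G : Type) [Group G] (φ : G →* H) (hφ : Function.Injective φ)
    (hmem : DecidableMembership π φ) :
    ∃ x : ℕ → G, Subgroup.closure (Set.range x) = ⊤ ∧
      ∃ lG : LinearOrder G,
        (∀ a b : G, lG.le a b ↔ l.le (φ a) (φ b)) ∧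
        Computable (fun w : List (ℕ × Bool) => orderSign lG (evalWord x w)) := by
  obtain ⟨u, hu, x, hx_surj, hx⟩ := hmem.exists_computable_enumeration hπ hφ
  refine ⟨x, by rw [hx_surj.range_eq, Subgroup.closure_univ], @LinearOrder.lift' G H l φ hφ,
    fun _ _ => Iff.rfl, ?_⟩
  exact (hlc.comp hu.substWord).of_eq fun w => by rw [orderSign_lift', map_evalWord_eq hx]

theorem pullback_order_computable_of_decidable_membership
    (H : Type) [Group H] (m : ℕ) (π : FreeGroup (Fin m) →* H)
    (hπ : Function.Surjective π) (l : LinearOrder H)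
    (hl : ∀ a b c : H, l.le b c → l.le (a * b) (a * c))
    (hlc : Computable (fun w : List (Fin m × Bool) => orderSign l (π (FreeGroup.mk w))))
    (G : Type) [Group G] [Countable G] (φ : G →* H) (hφ : Function.Injective φ)
    (hmem : DecidableMembership π φ) :
    ∃ x : ℕ → G, Subgroup.closure (Set.range x) = ⊤ ∧
      ∃ lG : LinearOrder G,
        (∀ a b : G, lG.le a b ↔ l.le (φ a) (φ b)) ∧
        Computable (fun w : List (ℕ × Bool) => orderSign lG (evalWord x w)) :=
  pullback_order_computable_of_decidable_membership_general H m π hπ l hlc G φ hφ hmem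
end

section
/- For every countable family (G_i)_{i∈ℕ} of finitely generated left-orderable groups there exists a left-orderable group H̃ generated by two elements such that every G_i admits an embedding into H̃ that is simultaneously quasi-isometric and Frattini. -/
/-
Let `P = ∏ G i` and `W = (P ≀ ℤ) ≀ ℤ`, both wreath products unrestricted. Left-orderability passes
to unrestricted products (order lexicographically along a well-order of the index set) and to
extensions, so `W` is left-orderable. List the generators of all the `G i` as `x₀, x₁, …` in `P`.
Let `t` generate the top copy of `ℤ`, and let `f` be the element of the base of `W` carrying the
shift `s` of `P ≀ ℤ` at `0` and the "Heaviside" element `h(x_k)` (equal to `x_k` at negative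
positions) at `-4 ^ k`. As `4 ^ l + 4 ^ k` is never a power of `4`, the commutator
`⁅f, t ^ 4 ^ k * f * t ^ (-4 ^ k)⁆` is supported at `0`, where it is `⁅s, h(x_k)⁆`, that is, `x_k`
placed at the origin. Hence `⟨t, f⟩` contains a copy of every `G i`. These copies are Frattini
because conjugate elements supported at the origin of a wreath product have conjugate values
there, and undistorted because the length `|q| + sup |values|` (iterated twice) is at most `1` on
`t` and `f` and restricts to the word length on each `G i`.
-/

open scoped commutatorElement

-- Valued in `ℕ∞`: the lengths used below are suprema over infinitely many coordinates.
structure IsLengthFunction {G : Type*} [Group G] (ℓ : G → ℕ∞) : Prop where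
  map_one : ℓ 1 = 0
  map_mul_le : ∀ a b, ℓ (a * b) ≤ ℓ a + ℓ b
  map_inv : ∀ a, ℓ a⁻¹ = ℓ a

namespace IsLengthFunction

variable {G : Type*} [Group G] {ℓ : G → ℕ∞}

lemma map_list_prod_le (hℓ : IsLengthFunction ℓ) (w : List G) :
    ℓ w.prod ≤ (w.map ℓ).sum := by
  induction w with
  | nil => simp [hℓ.map_one]
  | cons a w ih =>
    rw [List.prod_cons, List.map_cons, List.sum_cons]
    exact (hℓ.map_mul_le a _).trans (add_le_add le_rfl ih)

lemma comp {H : Type*} [Group H] {ℓ : H → ℕ∞}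
    (hℓ : IsLengthFunction ℓ) (φ : G →* H) : IsLengthFunction (fun g => ℓ (φ g)) where
  map_one := by simp [hℓ.map_one]
  map_mul_le a b := by simpa using hℓ.map_mul_le (φ a) (φ b)
  map_inv a := by simpa using hℓ.map_inv (φ a)

end IsLengthFunction

section WordLength

variable {G : Type*} [Group G] {X : Finset G}

lemma wordLength_le_length {w : List G} (hw : ∀ a ∈ w, a ∈ X ∨ a⁻¹ ∈ X) :
    wordLength X w.prod ≤ w.length :=
  Nat.sInf_le ⟨w, rfl, hw, rfl⟩

lemma wordLength_one : wordLength X 1 = 0 := by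
  simpa using wordLength_le_length (X := X) (w := []) (by simp)

lemma exists_word_length_eq_wordLength (hX : Generates X) (g : G) :
    ∃ w : List G, w.length = wordLength X g ∧ (∀ a ∈ w, a ∈ X ∨ a⁻¹ ∈ X) ∧ w.prod = g := by
  have hg : g ∈ Submonoid.closure ((X : Set G) ∪ (X : Set G)⁻¹) := by
    rw [← Subgroup.closure_toSubmonoid, Subgroup.mem_toSubmonoid, hX]
    exact Subgroup.mem_top g
  obtain ⟨w, hw, rfl⟩ := Submonoid.exists_list_of_mem_closure hg
  exact Nat.sInf_mem (s := {n | ∃ v : List G, v.length = n ∧ (∀ a ∈ v, a ∈ X ∨ a⁻¹ ∈ X) ∧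
    v.prod = w.prod}) ⟨w.length, w, rfl, fun a ha => (hw a ha).imp id Set.mem_inv.mp, rfl⟩

lemma wordLength_le_one {x : G} (hx : x ∈ X) : wordLength X x ≤ 1 := by
  simpa using wordLength_le_length (X := X) (w := [x]) (by simp [hx])

lemma isLengthFunction_wordLength (hX : Generates X) :
    IsLengthFunction (fun g => (wordLength X g : ℕ∞)) := by
  have inv_le : ∀ g : G, wordLength X g⁻¹ ≤ wordLength X g := fun g => by
    obtain ⟨w, hlen, hw, rfl⟩ := exists_word_length_eq_wordLength hX g
    rw [← hlen, List.prod_inv_reverse, ← List.length_map (f := (·⁻¹)), ← List.length_reverse]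
    refine wordLength_le_length fun a ha => ?_
    obtain ⟨b, hb, rfl⟩ := List.mem_map.mp (List.mem_reverse.mp ha)
    simpa [or_comm] using hw b hb
  refine ⟨?_, fun g h => ?_, fun g => ?_⟩
  · exact_mod_cast wordLength_one
  · obtain ⟨v, hv, hvX, rfl⟩ := exists_word_length_eq_wordLength hX g
    obtain ⟨w, hw, hwX, rfl⟩ := exists_word_length_eq_wordLength hX h
    rw [← List.prod_append, ← hv, ← hw]
    exact_mod_cast (wordLength_le_length (by simpa [or_imp, forall_and] using ⟨hvX, hwX⟩)).trans
      (List.length_append).le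
  · exact_mod_cast (inv_le g).antisymm (by simpa using inv_le g⁻¹)

lemma IsLengthFunction.le_mul_wordLength {ℓ : G → ℕ∞} (hℓ : IsLengthFunction ℓ)
    (hX : Generates X) {M : ℕ∞} (hM : ∀ x ∈ X, ℓ x ≤ M) (g : G) : ℓ g ≤ M * wordLength X g := by
  obtain ⟨w, hlen, hw, rfl⟩ := exists_word_length_eq_wordLength hX g
  have hletter : ∀ a ∈ w.map ℓ, a ≤ M := by
    simp only [List.mem_map]
    rintro _ ⟨a, ha, rfl⟩
    rcases hw a ha with h | h
    · exact hM a h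
    · simpa [hℓ.map_inv] using hM _ h
  calc ℓ w.prod ≤ (w.map ℓ).sum := hℓ.map_list_prod_le w
    _ ≤ (w.map ℓ).length • M := List.sum_le_card_nsmul _ M hletter
    _ = M * wordLength X w.prod := by rw [List.length_map, hlen, nsmul_eq_mul, mul_comm]

end WordLength

lemma isQIEmbedding_of_le {G H : Type*} [Group G] [Group H] {X : Finset G} {Y : Finset H}
    {φ : G →* H} (hφ : Function.Injective φ) (M : ℕ)
    (hlower : ∀ g, wordLength X g ≤ wordLength Y (φ g))
    (hupper : ∀ g, wordLength Y (φ g) ≤ M * wordLength X g) : IsQIEmbedding X Y φ := by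
  refine ⟨hφ, M + 1, 1, by positivity, one_pos, fun g => ⟨?_, ?_⟩⟩
  · have hlow : (wordLength X g : ℝ) ≤ wordLength Y (φ g) := by exact_mod_cast hlower g
    have hC : 1 / ((M : ℝ) + 1) ≤ 1 := by rw [div_le_one (by positivity)]; simp
    nlinarith [(wordLength X g).cast_nonneg' (α := ℝ)]
  · have hup : (wordLength Y (φ g) : ℝ) ≤ M * wordLength X g := by exact_mod_cast hupper g
    nlinarith [(wordLength X g).cast_nonneg' (α := ℝ)]

lemma isQIEmbedding_of_length {G H : Type*} [Group G] [Group H] {X : Finset G} {Y : Finset H}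
    (hX : Generates X) (hY : Generates Y) {φ : G →* H} (hφ : Function.Injective φ)
    {ℓ : H → ℕ∞} (hℓ : IsLengthFunction ℓ) (hℓY : ∀ y ∈ Y, ℓ y ≤ 1)
    (hℓφ : ∀ g, ℓ (φ g) = wordLength X g) : IsQIEmbedding X Y φ := by
  set M := X.sup fun g => wordLength Y (φ g)
  refine isQIEmbedding_of_le hφ M (fun g => ?_) (fun g => ?_)
  · have := hℓ.le_mul_wordLength hY hℓY (φ g)
    rw [hℓφ, one_mul] at this
    exact_mod_cast this
  · exact_mod_cast ((isLengthFunction_wordLength hY).comp φ).le_mul_wordLength hX (M := M)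
      (fun x hx => by exact_mod_cast Finset.le_sup (f := fun g => wordLength Y (φ g)) hx) g

structure IsPositiveCone {G : Type*} [Group G] (P : Set G) : Prop where
  mul_mem : ∀ {a b}, a ∈ P → b ∈ P → a * b ∈ P
  mem_or_inv_mem : ∀ {g}, g ≠ 1 → g ∈ P ∨ g⁻¹ ∈ P
  not_mem_of_inv_mem : ∀ {g}, g⁻¹ ∈ P → g ∉ P

namespace IsPositiveCone

variable {G : Type*} [Group G] {P : Set G}

lemma one_notMem (hP : IsPositiveCone P) : (1 : G) ∉ P :=
  fun h => hP.not_mem_of_inv_mem (by simpa using h) h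

noncomputable abbrev linearOrder (hP : IsPositiveCone P) : LinearOrder G where
  le a b := a = b ∨ a⁻¹ * b ∈ P
  le_refl a := Or.inl rfl
  le_trans a b c := by
    rintro (rfl | hab) (rfl | hbc)
    exacts [Or.inl rfl, Or.inr hbc, Or.inr hab,
      Or.inr (by simpa [mul_assoc] using hP.mul_mem hab hbc)]
  le_antisymm a b := by
    rintro (rfl | hab) (hba | hba)
    exacts [rfl, rfl, hba.symm, (hP.not_mem_of_inv_mem (by simpa using hba) hab).elim]
  le_total a b := by
    by_cases h : a = b
    · exact Or.inl (Or.inl h)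
    · refine (hP.mem_or_inv_mem (g := a⁻¹ * b) ?_).imp Or.inr fun h' => Or.inr (by simpa using h')
      rwa [Ne, inv_mul_eq_one]
  toDecidableLE := Classical.decRel _

lemma isLeftOrderable (hP : IsPositiveCone P) : IsLeftOrderable G :=
  ⟨hP.linearOrder, fun a b c => Or.imp (congrArg (a * ·)) (by simp [mul_assoc])⟩

lemma preimage {H : Type*} [Group H] {P : Set H} (hP : IsPositiveCone P) {φ : G →* H}
    (hφ : Function.Injective φ) : IsPositiveCone (φ ⁻¹' P) where
  mul_mem ha hb := by simpa using hP.mul_mem ha hb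
  mem_or_inv_mem hg := by simpa using hP.mem_or_inv_mem ((map_ne_one_iff φ hφ).mpr hg)
  not_mem_of_inv_mem h := hP.not_mem_of_inv_mem (by simpa using h)

end IsPositiveCone

lemma IsLeftOrderable.exists_isPositiveCone {G : Type*} [Group G] (h : IsLeftOrderable G) :
    ∃ P : Set G, IsPositiveCone P := by
  obtain ⟨l, hl⟩ := h
  let _ := l
  have hlt : ∀ a {b c : G}, b < c → a * b < a * c := fun a b c hbc =>
    lt_of_le_of_ne (hl a b c hbc.le) (by simpa using hbc.ne)
  refine ⟨{g | 1 < g}, ⟨fun {a b} ha hb => ?_, fun {g} hg => ?_, fun {g} hg hg' => ?_⟩⟩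
  · simpa using ha.trans (by simpa using hlt a hb)
  · rcases lt_or_gt_of_ne hg with h | h
    · exact Or.inr (by simpa using hlt g⁻¹ h)
    · exact Or.inl h
  · exact lt_asymm hg' (by simpa using hlt g hg)

section PiLex

variable {ι : Type*} [LinearOrder ι] {G : ι → Type*} [∀ i, Group (G i)]

def piLexCone (P : ∀ i, Set (G i)) : Set (∀ i, G i) :=
  {f | ∃ i, (∀ j < i, f j = 1) ∧ f i ∈ P i}

lemma isPositiveCone_piLexCone [WellFoundedLT ι] {P : ∀ i, Set (G i)}
    (hP : ∀ i, IsPositiveCone (P i)) : IsPositiveCone (piLexCone P) where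
  mul_mem := by
    rintro f g ⟨i, hfi, hf⟩ ⟨j, hgj, hg⟩
    rcases lt_trichotomy i j with h | rfl | h
    · exact ⟨i, fun k hk => by simp [hfi k hk, hgj k (hk.trans h)], by simpa [hgj i h] using hf⟩
    · exact ⟨i, fun k hk => by simp [hfi k hk, hgj k hk], (hP i).mul_mem hf hg⟩
    · exact ⟨j, fun k hk => by simp [hfi k (hk.trans h), hgj k hk], by simpa [hfi j h] using hg⟩
  mem_or_inv_mem := by
    intro f hf
    obtain ⟨i, hi, hmin⟩ := wellFounded_lt.has_min {i | f i ≠ 1}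
      (Function.ne_iff.mp hf)
    have hbelow : ∀ j < i, f j = 1 := fun j hj => not_not.mp fun h => hmin j h hj
    exact ((hP i).mem_or_inv_mem hi).imp (fun h => ⟨i, hbelow, h⟩)
      fun h => ⟨i, fun j hj => by simp [hbelow j hj], h⟩
  not_mem_of_inv_mem := by
    rintro f ⟨i, hfi, hf⟩ ⟨j, hfj, hf'⟩
    rcases lt_trichotomy i j with h | rfl | h
    · exact (hP i).one_notMem (by simpa [hfj i h] using hf)
    · exact (hP i).not_mem_of_inv_mem hf hf'
    · exact (hP j).one_notMem (by simpa [by simpa using hfi j h] using hf')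

end PiLex

lemma IsLeftOrderable.pi {ι : Type*} {G : ι → Type*} [∀ i, Group (G i)]
    (h : ∀ i, IsLeftOrderable (G i)) : IsLeftOrderable (∀ i, G i) := by
  let _ : LinearOrder ι := IsWellOrder.linearOrder WellOrderingRel
  have : WellFoundedLT ι := ⟨IsWellFounded.wf (r := WellOrderingRel)⟩
  choose P hP using fun i => (h i).exists_isPositiveCone
  exact (isPositiveCone_piLexCone hP).isLeftOrderable

lemma IsLeftOrderable.of_injective {G H : Type*} [Group G] [Group H] (h : IsLeftOrderable H)
    {φ : G →* H} (hφ : Function.Injective φ) : IsLeftOrderable G := by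
  obtain ⟨P, hP⟩ := h.exists_isPositiveCone
  exact (hP.preimage hφ).isLeftOrderable

lemma isLeftOrderable_of_isOrderedMonoid {G : Type*} [CommGroup G] [LinearOrder G]
    [IsOrderedMonoid G] : IsLeftOrderable G :=
  ⟨inferInstance, fun a _ _ h => mul_le_mul_right h a⟩

lemma IsLeftOrderable.of_ker {G Q : Type*} [Group G] [Group Q] (φ : G →* Q)
    (hker : IsLeftOrderable φ.ker) (hQ : IsLeftOrderable Q) : IsLeftOrderable G := by
  obtain ⟨PN, hPN⟩ := hker.exists_isPositiveCone
  obtain ⟨PQ, hPQ⟩ := hQ.exists_isPositiveCone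
  refine IsPositiveCone.isLeftOrderable
    (P := {g | φ g ∈ PQ ∨ ∃ h : φ g = 1, (⟨g, h⟩ : φ.ker) ∈ PN}) ⟨?_, fun {g} hg => ?_, ?_⟩
  · rintro a b (ha | ⟨ha, ha'⟩) (hb | ⟨hb, hb'⟩)
    · exact Or.inl (by simpa using hPQ.mul_mem ha hb)
    · exact Or.inl (by simpa [hb] using ha)
    · exact Or.inl (by simpa [ha] using hb)
    · exact Or.inr ⟨by simp [ha, hb], hPN.mul_mem ha' hb'⟩
  · by_cases h : φ g = 1
    · have : (⟨g, h⟩ : φ.ker) ≠ 1 := fun h' => hg (congrArg Subtype.val h')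
      exact (hPN.mem_or_inv_mem this).imp (fun h' => Or.inr ⟨h, h'⟩)
        fun h' => Or.inr ⟨by simp [h], h'⟩
    · exact (hPQ.mem_or_inv_mem h).imp Or.inl fun h' => Or.inl (by simpa using h')
  · rintro g (hg | ⟨hg, hg'⟩) (h | ⟨h, h'⟩)
    · exact hPQ.not_mem_of_inv_mem (by simpa using hg) h
    · exact hPQ.one_notMem (by simpa [h] using hg)
    · exact hPQ.one_notMem (by simpa [show φ g = 1 by simpa using hg] using h)
    · exact hPN.not_mem_of_inv_mem (g := ⟨g, h⟩) hg' h'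

section Frattini

variable {G H K : Type*} [Group G] [Group H] [Group K]

lemma IsFrattini.comp {φ : G →* H} {ψ : H →* K} (hψ : IsFrattini ψ) (hφ : IsFrattini φ) :
    IsFrattini (ψ.comp φ) :=
  ⟨hψ.1.comp hφ.1, fun a b => (hφ.2 a b).trans (hψ.2 _ _)⟩

lemma IsFrattini.of_comp {φ : G →* H} {ψ : H →* K} (h : IsFrattini (ψ.comp φ)) :
    IsFrattini φ :=
  ⟨Function.Injective.of_comp (f := ψ) h.1,
    fun a b => ⟨φ.map_isConj, fun hab => (h.2 a b).mpr (ψ.map_isConj hab)⟩⟩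

lemma isFrattini_mulSingle {ι : Type*} [DecidableEq ι] (G : ι → Type*) [∀ i, Group (G i)]
    (i : ι) : IsFrattini (MonoidHom.mulSingle G i) :=
  ⟨Pi.mulSingle_injective i, fun a b => ⟨(MonoidHom.mulSingle G i).map_isConj,
    fun h => by simpa using (Pi.evalMonoidHom G i).map_isConj h⟩⟩

end Frattini

section PiSupLength

variable {ι : Type*} {G : ι → Type*} [∀ i, Group (G i)]

noncomputable def piSupLength (ℓ : ∀ i, G i → ℕ∞) (f : ∀ i, G i) : ℕ∞ := ⨆ i, ℓ i (f i)

lemma IsLengthFunction.piSup {ℓ : ∀ i, G i → ℕ∞} (hℓ : ∀ i, IsLengthFunction (ℓ i)) :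
    IsLengthFunction (piSupLength ℓ) where
  map_one := by simp [piSupLength, (hℓ _).map_one]
  map_mul_le f g := iSup_le fun i => ((hℓ i).map_mul_le (f i) (g i)).trans
    (add_le_add (le_iSup (fun i => ℓ i (f i)) i) (le_iSup (fun i => ℓ i (g i)) i))
  map_inv f := iSup_congr fun i => (hℓ i).map_inv (f i)

lemma piSupLength_mulSingle [DecidableEq ι] {ℓ : ∀ i, G i → ℕ∞} (hℓ : ∀ i, ℓ i 1 = 0)
    (i : ι) (a : G i) : piSupLength ℓ (Pi.mulSingle i a) = ℓ i a := by
  refine le_antisymm (iSup_le fun j => ?_) (le_iSup_of_le i (by simp))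
  rcases eq_or_ne j i with rfl | h
  · simp
  · simp [h, hℓ]

lemma piSupLength_comp_mulLeft {Q D : Type*} [Group Q] [Group D] (ℓ : D → ℕ∞) (f : Q → D)
    (q : Q) : piSupLength (fun _ => ℓ) (fun x => f (q * x)) = piSupLength (fun _ => ℓ) f :=
  (Equiv.mulLeft q).iSup_comp (g := fun x => ℓ (f x))

end PiSupLength

def intLength (q : Multiplicative ℤ) : ℕ∞ := q.toAdd.natAbs

lemma isLengthFunction_intLength : IsLengthFunction intLength where
  map_one := by simp [intLength]
  map_mul_le a b := by
    simp only [intLength, toAdd_mul]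
    exact_mod_cast Int.natAbs_add_le _ _
  map_inv a := by simp [intLength]

namespace RegularWreathProduct

variable {D Q : Type*} [Group D] [Group Q]

-- Mathlib's `inl : Q →* D ≀ᵣ Q` embeds the acting group; `base` embeds the base group.
def base : (Q → D) →* D ≀ᵣ Q where
  toFun f := ⟨f, 1⟩
  map_one' := rfl
  map_mul' f g := by ext <;> simp

@[simp] lemma base_left (f : Q → D) : (base f).left = f := rfl

@[simp] lemma base_right (f : Q → D) : (base f).right = 1 := rfl

lemma base_injective : Function.Injective (base : (Q → D) → D ≀ᵣ Q) :=
  fun _ _ h => congrArg left h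

lemma inl_mul_base_mul_inv (q : Q) (f : Q → D) :
    inl q * base f * (inl q)⁻¹ = base (fun x => f (q⁻¹ * x)) := by
  ext <;> simp [← map_inv]

lemma commutatorElement_inl_base (q : Q) (f : Q → D) :
    ⁅(inl q : D ≀ᵣ Q), base f⁆ = base (fun x => f (q⁻¹ * x) * (f x)⁻¹) := by
  ext <;> simp [commutatorElement_def, ← map_inv]

lemma isConj_of_isConj_base_mulSingle [DecidableEq Q] {a b : D}
    (h : IsConj (base (Pi.mulSingle 1 a) : D ≀ᵣ Q) (base (Pi.mulSingle 1 b))) : IsConj a b := by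
  obtain ⟨c, hc⟩ := isConj_iff.mp h
  have hleft : ∀ x, c.left x * (Pi.mulSingle 1 a : Q → D) (c.right⁻¹ * x) =
      (Pi.mulSingle 1 b : Q → D) x * c.left x := fun x => by
    simpa using congrFun (congrArg left (eq_mul_of_mul_inv_eq hc)) x
  by_cases hr : c.right = 1
  · exact isConj_iff.mpr ⟨c.left 1, mul_inv_eq_of_eq_mul (by simpa [hr] using hleft 1)⟩
  · have ha : a = 1 := by simpa [Pi.mulSingle_apply, hr] using hleft c.right
    have hb : b = 1 := by simpa [Pi.mulSingle_apply, hr] using hleft 1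
    rw [ha, hb]

def kerRightHomLeft : (rightHom : D ≀ᵣ Q →* Q).ker →* (Q → D) where
  toFun x := x.1.left
  map_one' := rfl
  map_mul' x y := by
    have : x.1.right = 1 := x.2
    simp [this]

lemma kerRightHomLeft_injective : Function.Injective (kerRightHomLeft (D := D) (Q := Q)) :=
  fun x y h => Subtype.ext (RegularWreathProduct.ext h (x.2.trans y.2.symm))

noncomputable def length (ℓD : D → ℕ∞) (ℓQ : Q → ℕ∞) (x : D ≀ᵣ Q) : ℕ∞ :=
  ℓQ x.right + piSupLength (fun _ => ℓD) x.left

variable {ℓD : D → ℕ∞} {ℓQ : Q → ℕ∞}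

lemma isLengthFunction_length (hD : IsLengthFunction ℓD) (hQ : IsLengthFunction ℓQ) :
    IsLengthFunction (length ℓD ℓQ) where
  map_one := by simp [length, hQ.map_one, (IsLengthFunction.piSup fun _ => hD).map_one]
  map_mul_le a b := by
    have hpi := IsLengthFunction.piSup fun (_ : Q) => hD
    calc length ℓD ℓQ (a * b)
        ≤ (ℓQ a.right + ℓQ b.right) +
            (piSupLength (fun _ => ℓD) a.left + piSupLength (fun _ => ℓD) b.left) := by
          refine add_le_add (hQ.map_mul_le _ _) ?_
          simpa [piSupLength_comp_mulLeft] using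
            hpi.map_mul_le a.left (fun x => b.left (a.right⁻¹ * x))
      _ = length ℓD ℓQ a + length ℓD ℓQ b := add_add_add_comm _ _ _ _
  map_inv a := by
    have hpi := IsLengthFunction.piSup fun (_ : Q) => hD
    simp only [length, inv_right, inv_left, hQ.map_inv]
    rw [piSupLength_comp_mulLeft ℓD (a.left⁻¹) a.right, hpi.map_inv]

lemma length_base (hQ : ℓQ 1 = 0) (f : Q → D) :
    length ℓD ℓQ (base f) = piSupLength (fun _ => ℓD) f := by
  simp [length, hQ]

lemma length_inl (hD : ℓD 1 = 0) (q : Q) : length ℓD ℓQ (inl q) = ℓQ q := by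
  simp [length, piSupLength, hD]

section Single

variable [DecidableEq Q]

noncomputable def baseSingle : D →* D ≀ᵣ Q := base.comp (MonoidHom.mulSingle (fun _ => D) 1)

@[simp] lemma baseSingle_apply (a : D) : (baseSingle a : D ≀ᵣ Q) = base (Pi.mulSingle 1 a) := rfl

lemma isFrattini_baseSingle : IsFrattini (baseSingle : D →* D ≀ᵣ Q) :=
  ⟨base_injective.comp (Pi.mulSingle_injective (M := fun _ : Q => D) 1),
    fun _ _ => ⟨baseSingle.map_isConj, isConj_of_isConj_base_mulSingle⟩⟩

lemma length_baseSingle (hD : ℓD 1 = 0) (hQ : ℓQ 1 = 0) (a : D) :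
    length ℓD ℓQ (baseSingle a) = ℓD a := by
  rw [baseSingle_apply, length_base hQ, piSupLength_mulSingle (fun _ => hD)]

end Single

end RegularWreathProduct

open RegularWreathProduct in
lemma IsLeftOrderable.regularWreathProduct {D Q : Type*} [Group D] [Group Q]
    (hD : IsLeftOrderable D) (hQ : IsLeftOrderable Q) : IsLeftOrderable (D ≀ᵣ Q) :=
  .of_ker rightHom ((IsLeftOrderable.pi fun _ => hD).of_injective kerRightHomLeft_injective) hQ

open RegularWreathProduct Multiplicative

lemma four_pow_add_four_pow_ne (a b c : ℕ) : (4 : ℤ) ^ a + 4 ^ b ≠ 4 ^ c := by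
  have h : ∀ n, (4 : ℤ) ^ n % 3 = 1 := fun n =>
    by simpa [Int.ModEq] using (show (4 : ℤ) ≡ 1 [ZMOD 3] by decide).pow n
  have := h a; have := h b; have := h c
  omega

section Embedding

variable {P : Type*} [Group P]

noncomputable def heaviside (x : P) : Multiplicative ℤ → P :=
  fun q => if q.toAdd < 0 then x else 1

lemma commutatorElement_inl_base_heaviside (x : P) :
    ⁅(inl (ofAdd 1) : P ≀ᵣ Multiplicative ℤ), base (heaviside x)⁆ = baseSingle x := by
  rw [commutatorElement_inl_base, baseSingle_apply]
  congr 1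
  funext q
  have : q = 1 ↔ q.toAdd = 0 := toAdd_eq_zero.symm
  simp only [heaviside, Pi.mulSingle_apply, this, toAdd_mul, toAdd_inv, toAdd_ofAdd]
  split_ifs <;> first | omega | simp

def lampPos (k : ℕ) : Multiplicative ℤ := ofAdd (-4 ^ k)

lemma lampPos_injective : Function.Injective lampPos := fun a b h =>
  Int.pow_right_injective (by norm_num) (neg_injective (ofAdd.injective h))

lemma lampPos_ne_one (k : ℕ) : lampPos k ≠ 1 := fun h => by
  simpa [lampPos] using congrArg toAdd h

noncomputable def lampFun (x : ℕ → P) : Multiplicative ℤ → P ≀ᵣ Multiplicative ℤ :=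
  Function.update (Function.extend lampPos (fun k => base (heaviside (x k))) 1) 1 (inl (ofAdd 1))

variable (x : ℕ → P)

lemma lampFun_one : lampFun x 1 = inl (ofAdd 1) := Function.update_self ..

lemma lampFun_lampPos (k : ℕ) : lampFun x (lampPos k) = base (heaviside (x k)) := by
  rw [lampFun, Function.update_of_ne (lampPos_ne_one k), lampPos_injective.extend_apply]

lemma lampFun_eq_one {q : Multiplicative ℤ} (h1 : q ≠ 1) (hpos : ∀ k, lampPos k ≠ q) :
    lampFun x q = 1 := by
  rw [lampFun, Function.update_of_ne h1, Function.extend_apply' _ _ _ (not_exists.mpr hpos)]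
  rfl

-- `4 ^ l + 4 ^ k` is never a power of `4`, so the supports of `lampFun x` and of its translate by
-- `4 ^ k` meet only at the origin.
lemma commutatorElement_lampFun (k : ℕ) (q : Multiplicative ℤ) :
    ⁅lampFun x q, lampFun x ((ofAdd (4 ^ k : ℤ))⁻¹ * q)⁆ =
      (Pi.mulSingle 1 (baseSingle (x k)) : Multiplicative ℤ → _) q := by
  by_cases hq : q = 1
  · have : (ofAdd (4 ^ k : ℤ))⁻¹ * q = lampPos k := by simp [hq, lampPos]
    rw [this, hq, lampFun_one, lampFun_lampPos, commutatorElement_inl_base_heaviside,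
      Pi.mulSingle_eq_same]
  rw [Pi.mulSingle_eq_of_ne hq]
  by_cases hpos : ∃ l, lampPos l = q
  · obtain ⟨l, rfl⟩ := hpos
    refine (congrArg _ (lampFun_eq_one x ?_ fun j h => ?_)).trans (commutatorElement_one_right _)
    · intro h
      have h' : -4 ^ k + -4 ^ l = (0 : ℤ) := by simpa [lampPos] using congrArg toAdd h
      linarith [pow_pos (by norm_num : (0 : ℤ) < 4) k, pow_pos (by norm_num : (0 : ℤ) < 4) l]
    · simp only [lampPos, ← ofAdd_neg, ← ofAdd_add, ofAdd.injective.eq_iff] at h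
      exact four_pow_add_four_pow_ne k l j (by linarith)
  · rw [lampFun_eq_one x hq (not_exists.mp hpos), commutatorElement_one_left]

end Embedding

abbrev DoubleWreath (P : Type*) [Group P] := (P ≀ᵣ Multiplicative ℤ) ≀ᵣ Multiplicative ℤ

lemma isLeftOrderable_doubleWreath {P : Type*} [Group P] (h : IsLeftOrderable P) :
    IsLeftOrderable (DoubleWreath P) :=
  have hZ := isLeftOrderable_of_isOrderedMonoid (G := Multiplicative ℤ)
  (h.regularWreathProduct hZ).regularWreathProduct hZ

noncomputable def doubleWreathLength {P : Type*} [Group P] (ℓ : P → ℕ∞) : DoubleWreath P → ℕ∞ :=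
  length (length ℓ intLength) intLength

section TwoGenerated

variable {P : Type*} [Group P] (x : ℕ → P)

noncomputable def twoGenSubgroup : Subgroup (DoubleWreath P) :=
  Subgroup.closure {inl (ofAdd 1), base (lampFun x)}

noncomputable def shiftGen : twoGenSubgroup x :=
  ⟨inl (ofAdd 1), Subgroup.subset_closure (by simp)⟩

noncomputable def lampGen : twoGenSubgroup x :=
  ⟨base (lampFun x), Subgroup.subset_closure (by simp)⟩

lemma closure_shiftGen_lampGen : Subgroup.closure {shiftGen x, lampGen x} = ⊤ := by
  refine (congrArg Subgroup.closure ?_).trans Subgroup.closure_closure_coe_preimage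
  ext ⟨y, _⟩
  simp only [Set.mem_insert_iff, Set.mem_singleton_iff, shiftGen, lampGen, Subtype.ext_iff]
  rfl

lemma commutatorElement_base_lampFun_conj (k : ℕ) :
    ⁅base (lampFun x), inl (ofAdd (4 ^ k : ℤ)) * base (lampFun x) * (inl (ofAdd (4 ^ k : ℤ)))⁻¹⁆ =
      (baseSingle (baseSingle (x k)) : DoubleWreath P) := by
  rw [inl_mul_base_mul_inv, ← map_commutatorElement, baseSingle_apply]
  congr 1
  funext q
  exact commutatorElement_lampFun x k q

lemma baseSingle_baseSingle_mem_twoGenSubgroup (k : ℕ) :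
    baseSingle (baseSingle (x k)) ∈ twoGenSubgroup x := by
  have ht : (inl (ofAdd 1) : DoubleWreath P) ∈ twoGenSubgroup x := (shiftGen x).2
  have hf : base (lampFun x) ∈ twoGenSubgroup x := (lampGen x).2
  have hconj : inl (ofAdd (4 ^ k : ℤ)) * base (lampFun x) * (inl (ofAdd (4 ^ k : ℤ)))⁻¹ ∈
      twoGenSubgroup x := by
    have : (inl (ofAdd (4 ^ k : ℤ)) : DoubleWreath P) = inl (ofAdd 1) ^ (4 ^ k : ℤ) := by
      rw [← map_zpow, ← ofAdd_zsmul, smul_eq_mul, mul_one]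
    rw [this]
    exact mul_mem (mul_mem (zpow_mem ht _) hf) (inv_mem (zpow_mem ht _))
  rw [← commutatorElement_base_lampFun_conj, commutatorElement_def]
  exact mul_mem (mul_mem (mul_mem hf hconj) (inv_mem hf)) (inv_mem hconj)

lemma baseSingle_baseSingle_map_mem_twoGenSubgroup {G : Type*} [Group G] {X : Finset G}
    (hX : Generates X) (φ : G →* P) (hφX : ∀ a ∈ X, φ a ∈ Set.range x) (g : G) :
    baseSingle (baseSingle (φ g)) ∈ twoGenSubgroup x := by
  let ψ : G →* DoubleWreath P := (baseSingle.comp baseSingle).comp φ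
  have : (⊤ : Subgroup G).map ψ ≤ twoGenSubgroup x := by
    rw [← hX, MonoidHom.map_closure, Subgroup.closure_le]
    rintro _ ⟨a, ha, rfl⟩
    obtain ⟨k, hk⟩ := hφX a ha
    simpa [ψ, ← hk] using baseSingle_baseSingle_mem_twoGenSubgroup x k
  exact this ⟨g, trivial, rfl⟩

variable {x} {ℓ : P → ℕ∞}

lemma isLengthFunction_doubleWreathLength (hℓ : IsLengthFunction ℓ) :
    IsLengthFunction (doubleWreathLength ℓ) :=
  isLengthFunction_length (isLengthFunction_length hℓ isLengthFunction_intLength)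
    isLengthFunction_intLength

lemma doubleWreathLength_baseSingle_baseSingle (hℓ : IsLengthFunction ℓ) (a : P) :
    doubleWreathLength ℓ (baseSingle (baseSingle a)) = ℓ a := by
  have h1 := isLengthFunction_intLength.map_one
  rw [doubleWreathLength,
    length_baseSingle (isLengthFunction_length hℓ isLengthFunction_intLength).map_one h1,
    length_baseSingle hℓ.map_one h1]

lemma length_lampFun_le (hℓ : IsLengthFunction ℓ) (hx : ∀ k, ℓ (x k) ≤ 1) (q : Multiplicative ℤ) :
    length ℓ intLength (lampFun x q) ≤ 1 := by
  by_cases h1 : q = 1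
  · simp [h1, lampFun_one, length_inl hℓ.map_one, intLength]
  by_cases hpos : ∃ k, lampPos k = q
  · obtain ⟨k, rfl⟩ := hpos
    rw [lampFun_lampPos, length_base isLengthFunction_intLength.map_one]
    refine iSup_le fun r => (hx k).trans' ?_
    unfold heaviside
    split_ifs <;> simp [hℓ.map_one]
  · simp [lampFun_eq_one x h1 (not_exists.mp hpos),
      (isLengthFunction_length hℓ isLengthFunction_intLength).map_one]

lemma doubleWreathLength_shiftGen_le (hℓ : IsLengthFunction ℓ) :
    doubleWreathLength ℓ (shiftGen x) ≤ 1 := by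
  simp [shiftGen, doubleWreathLength,
    length_inl (isLengthFunction_length hℓ isLengthFunction_intLength).map_one, intLength]

lemma doubleWreathLength_lampGen_le (hℓ : IsLengthFunction ℓ) (hx : ∀ k, ℓ (x k) ≤ 1) :
    doubleWreathLength ℓ (lampGen x) ≤ 1 := by
  rw [lampGen, doubleWreathLength, length_base isLengthFunction_intLength.map_one]
  exact iSup_le (length_lampFun_le hℓ hx)

lemma exists_isQIEmbedding_isFrattini_twoGenSubgroup [DecidableEq (twoGenSubgroup x)]
    (hℓ : IsLengthFunction ℓ) (hx : ∀ k, ℓ (x k) ≤ 1) {G : Type*} [Group G] {X : Finset G}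
    (hX : Generates X) {φ : G →* P} (hφ : IsFrattini φ) (hφX : ∀ a ∈ X, φ a ∈ Set.range x)
    (hℓφ : ∀ g, ℓ (φ g) = wordLength X g) :
    ∃ ψ : G →* twoGenSubgroup x,
      IsQIEmbedding X {shiftGen x, lampGen x} ψ ∧ IsFrattini ψ := by
  let ψ := ((baseSingle.comp baseSingle).comp φ).codRestrict (twoGenSubgroup x)
    (baseSingle_baseSingle_map_mem_twoGenSubgroup x hX φ hφX)
  have hψ : IsFrattini ψ := IsFrattini.of_comp (ψ := (twoGenSubgroup x).subtype) <|
    (isFrattini_baseSingle.comp isFrattini_baseSingle).comp hφ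
  have hY : Generates ({shiftGen x, lampGen x} : Finset (twoGenSubgroup x)) := by
    rw [Generates, Finset.coe_insert, Finset.coe_singleton, closure_shiftGen_lampGen]
  refine ⟨ψ, isQIEmbedding_of_length hX hY hψ.1
    ((isLengthFunction_doubleWreathLength hℓ).comp (twoGenSubgroup x).subtype)
    (fun y hy => ?_) (fun g => ?_), hψ⟩
  · rcases Finset.mem_insert.mp hy with rfl | hy
    · exact doubleWreathLength_shiftGen_le (x := x) hℓ
    · rw [Finset.mem_singleton.mp hy]
      exact doubleWreathLength_lampGen_le hℓ hx
  · exact (doubleWreathLength_baseSingle_baseSingle hℓ _).trans (hℓφ g)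

end TwoGenerated

lemma exists_seq_range_eq_mulSingle_image {ι : Type*} [Countable ι] [DecidableEq ι]
    {G : ι → Type*} [∀ i, Group (G i)] (X : ∀ i, Finset (G i)) :
    ∃ x : ℕ → ∀ i, G i, Set.range x = insert 1 (⋃ i, Pi.mulSingle i '' (X i : Set (G i))) := by
  have hcount : (insert 1 (⋃ i, Pi.mulSingle i '' (X i : Set (G i)))).Countable :=
    .insert 1 (Set.countable_iUnion fun i => ((X i).finite_toSet.image _).countable)
  obtain ⟨x, hx⟩ := hcount.exists_eq_range (Set.insert_nonempty _ _)
  exact ⟨x, hx.symm⟩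

lemma piSupLength_wordLength_le_one {ι : Type*} [DecidableEq ι] {G : ι → Type*}
    [∀ i, Group (G i)] (X : ∀ i, Finset (G i)) {p : ∀ i, G i}
    (hp : p ∈ insert 1 (⋃ i, Pi.mulSingle i '' (X i : Set (G i)))) :
    piSupLength (fun i g => (wordLength (X i) g : ℕ∞)) p ≤ 1 := by
  rcases hp with rfl | hp
  · simp [piSupLength, wordLength_one]
  · obtain ⟨i, a, ha, rfl⟩ := Set.mem_iUnion.mp hp
    rw [piSupLength_mulSingle (fun i => by simp [wordLength_one])]
    exact_mod_cast wordLength_le_one ha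

theorem family_qi_frattini_embedding_into_two_generated_leftOrderable
    (G : ℕ → Type) [∀ i, Group (G i)] (hfg : ∀ i, Group.FG (G i))
    (hlo : ∀ i, IsLeftOrderable (G i)) :
    ∃ (H : Type) (_ : Group H) (a b : H),
      Subgroup.closure {a, b} = ⊤ ∧ IsLeftOrderable H ∧
      ∀ i, ∃ (X : Finset (G i)) (Y : Finset H) (φ : G i →* H),
        Generates X ∧ Generates Y ∧ IsQIEmbedding X Y φ ∧ IsFrattini φ := by
  classical
  choose X hX using fun i => (hfg i).out
  obtain ⟨x, hx⟩ := exists_seq_range_eq_mulSingle_image X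
  let ℓ := piSupLength fun i (g : G i) => (wordLength (X i) g : ℕ∞)
  have hℓ : IsLengthFunction ℓ := .piSup fun i => isLengthFunction_wordLength (hX i)
  have hX_mem i : ∀ a ∈ X i, MonoidHom.mulSingle G i a ∈ Set.range x := fun a ha =>
    hx ▸ Set.mem_insert_of_mem _ (Set.mem_iUnion.mpr ⟨i, a, ha, rfl⟩)
  refine ⟨twoGenSubgroup x, inferInstance, shiftGen x, lampGen x, closure_shiftGen_lampGen x,
    (isLeftOrderable_doubleWreath (.pi hlo)).of_injective (Subgroup.subtype_injective _),
    fun i => ?_⟩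
  obtain ⟨ψ, hψ⟩ := exists_isQIEmbedding_isFrattini_twoGenSubgroup hℓ
    (fun k => piSupLength_wordLength_le_one X (hx ▸ Set.mem_range_self k)) (hX i)
    (isFrattini_mulSingle G i) (hX_mem i)
    (piSupLength_mulSingle (fun i => (isLengthFunction_wordLength (hX i)).map_one) i)
  exact ⟨X i, _, ψ, hX i, by simp [Generates, closure_shiftGen_lampGen], hψ⟩
end

section
/- Let G and H be finitely generated groups with finite generating sets X and Y respectively, let π be a surjective homomorphism from the free group on Y onto H, and let φ : G → H be an injective homomorphism that is a quasi-isometric embedding with respect to X and Y. If H has decidable word problem (with respect to π), then the membership problem for φ(G) in H is decidable: the set of words over Y ∪ Y⁻¹ whose image under π lies in the subgroup φ(G) is a computable set. -/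
section AuxComp

variable {β : Type*}

/-- All concatenations of at most `n` blocks from `W`. -/
def blockConcats (W : List (List β)) : ℕ → List (List β)
  | 0 => [[]]
  | n + 1 => blockConcats W n ++ W.flatMap fun v => (blockConcats W n).map fun u => v ++ u

theorem mem_blockConcats (W : List (List β)) (n : ℕ) (u : List β) :
    u ∈ blockConcats W n ↔
      ∃ bs : List (List β), bs.length ≤ n ∧ (∀ b ∈ bs, b ∈ W) ∧ bs.flatten = u := by
  induction n generalizing u with
  | zero =>
    simp only [blockConcats, List.mem_singleton]
    constructor
    · rintro rfl; exact ⟨[], by simp⟩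
    · rintro ⟨bs, h1, -, rfl⟩
      rw [List.length_eq_zero_iff.mp (Nat.le_zero.mp h1)]; rfl
  | succ n ih =>
    simp only [blockConcats, List.mem_append, List.mem_flatMap, List.mem_map]
    constructor
    · rintro (h | ⟨v, hv, u', hu', rfl⟩)
      · obtain ⟨bs, h1, h2, h3⟩ := (ih u).mp h
        exact ⟨bs, h1.trans (Nat.le_succ n), h2, h3⟩
      · obtain ⟨bs, h1, h2, h3⟩ := (ih u').mp hu'
        refine ⟨v :: bs, by simpa using h1, ?_, by simp [h3]⟩
        intro b hb
        rcases List.mem_cons.mp hb with rfl | hb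
        · exact hv
        · exact h2 b hb
    · rintro ⟨bs, h1, h2, rfl⟩
      cases bs with
      | nil => exact Or.inl ((ih _).mpr ⟨[], by simp⟩)
      | cons b bs' =>
        refine Or.inr ⟨b, h2 b (by simp), bs'.flatten, (ih _).mpr
          ⟨bs', by simpa using Nat.le_of_succ_le_succ h1,
            fun x hx => h2 x (by simp [hx]), rfl⟩, by simp⟩

theorem blockConcats_primrec [Primcodable β] (W : List (List β)) :
    Primrec (blockConcats W) := by
  have hstep : Primrec fun IH : List (List β) =>
      IH ++ W.flatMap fun v => IH.map fun u => v ++ u := by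
    refine Primrec.list_append.comp .id ?_
    refine Primrec.list_flatMap (.const W) ?_
    exact Primrec.list_map Primrec.fst
      (Primrec.list_append.comp (Primrec.snd.comp .fst) .snd).to₂
  have : Primrec fun n => (Nat.rec [[]]
      (fun _ IH => IH ++ W.flatMap fun v => IH.map fun u => v ++ u) n : List (List β)) :=
    Primrec.nat_rec₁ _ (hstep.comp Primrec.snd).to₂
  exact this.of_eq fun n => by
    induction n with
    | zero => rfl
    | succ n ihn => simp only [blockConcats, ihn]

private theorem nat_rec_eq_iterate {σ : Type*} (f : σ → σ) (a : σ) (n : ℕ) :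
    (Nat.rec a (fun _ s => f s) n : σ) = f^[n] a := by
  induction n with
  | zero => rfl
  | succ n ih => simp [Function.iterate_succ_apply', ih]

theorem computable_list_any [Primcodable β] {g : β → Bool} (hg : Computable g) :
    Computable fun l : List β => l.any g := by
  classical
  set stepf : List β × Bool → List β × Bool :=
    fun s => (s.1.tail, s.2 || (s.1.head?.casesOn false g)) with hstepf
  have hstep : Computable stepf := by
    refine Computable.pair (Primrec.list_tail.to_comp.comp .fst) ?_
    refine Primrec.or.to_comp.comp .snd ?_
    exact Computable.option_casesOn (Primrec.list_head?.to_comp.comp .fst)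
      (.const false) (hg.comp .snd).to₂
  have hmain : Computable fun l : List β =>
      (Nat.rec (l, false) (fun _ s => stepf s) l.length : List β × Bool).2 := by
    refine Computable.snd.comp ?_
    exact Computable.nat_rec Primrec.list_length.to_comp
      (Computable.pair .id (.const false)) ((hstep.comp (Computable.snd.comp .snd)).to₂)
  refine hmain.of_eq fun l => ?_
  rw [nat_rec_eq_iterate]
  suffices h : ∀ (rem : List β) (acc : Bool), (stepf^[rem.length] (rem, acc)).2 = (acc || rem.any g) by
    simpa using h l false
  intro rem
  induction rem with
  | nil => simp
  | cons b t ih =>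
    intro acc
    rw [List.length_cons, Function.iterate_succ_apply]
    have : stepf (b :: t, acc) = (t, acc || g b) := by simp [hstepf]
    rw [this, ih]
    simp [Bool.or_assoc]

end AuxComp

section AuxGrp

variable {G : Type*} [Group G]

theorem wordLength_le (X : Finset G) (g : G) (L : List G)
    (hL : ∀ a ∈ L, a ∈ X ∨ a⁻¹ ∈ X) (hp : L.prod = g) : wordLength X g ≤ L.length :=
  Nat.sInf_le ⟨L, rfl, hL, hp⟩

theorem wordLength_spec {X : Finset G} (hX : Generates X) (g : G) :
    ∃ L : List G, L.length = wordLength X g ∧ (∀ a ∈ L, a ∈ X ∨ a⁻¹ ∈ X) ∧ L.prod = g := by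
  have hg : g ∈ Subgroup.closure (X : Set G) := by rw [hX]; trivial
  rw [← Subgroup.mem_toSubmonoid, Subgroup.closure_toSubmonoid] at hg
  obtain ⟨l, hl, hp⟩ := Submonoid.exists_list_of_mem_closure hg
  have hne : {n | ∃ w : List G, w.length = n ∧ (∀ a ∈ w, a ∈ X ∨ a⁻¹ ∈ X) ∧ w.prod = g}.Nonempty := by
    refine ⟨l.length, l, rfl, fun a ha => ?_, hp⟩
    rcases hl a ha with h | h
    · exact Or.inl h
    · exact Or.inr (Set.mem_inv.mp h)
  exact Nat.sInf_mem hne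

variable {H : Type*} [Group H] {m : ℕ} (π : FreeGroup (Fin m) →* H)

theorem pi_mk_eq_prod (w : List (Fin m × Bool)) :
    (w.map fun p => if p.2 then π (FreeGroup.of p.1) else (π (FreeGroup.of p.1))⁻¹).prod
      = π (FreeGroup.mk w) := by
  induction w with
  | nil => simp [← FreeGroup.one_eq_mk]
  | cons p t ih =>
    have : FreeGroup.mk (p :: t) = FreeGroup.mk [p] * FreeGroup.mk t := by
      rw [FreeGroup.mul_mk]; rfl
    rw [List.map_cons, List.prod_cons, ih, this, map_mul]
    congr 1
    rcases p with ⟨a, b⟩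
    cases b with
    | true => rfl
    | false =>
      have : FreeGroup.mk [(a, false)] = (FreeGroup.of a)⁻¹ := by
        rw [show (FreeGroup.of a)⁻¹ = FreeGroup.mk (FreeGroup.invRev [(a, true)]) from
          FreeGroup.inv_mk]
        simp [FreeGroup.invRev]
    
      simp [this, map_inv]

theorem wordLength_pi_le (Y : Finset H)
    (hY : (Y : Set H) = Set.range fun j : Fin m => π (FreeGroup.of j))
    (w : List (Fin m × Bool)) :
    wordLength Y (π (FreeGroup.mk w)) ≤ w.length := by
  have hmem : ∀ j : Fin m, π (FreeGroup.of j) ∈ Y := by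
    intro j
    have : π (FreeGroup.of j) ∈ (Y : Set H) := by rw [hY]; exact ⟨j, rfl⟩
    exact this
  refine le_trans (wordLength_le Y _ (w.map fun p =>
    if p.2 then π (FreeGroup.of p.1) else (π (FreeGroup.of p.1))⁻¹) ?_ (pi_mk_eq_prod π w))
    (by simp)
  intro a ha
  obtain ⟨p, hp, rfl⟩ := List.mem_map.mp ha
  rcases p with ⟨j, b⟩
  cases b with
  | true => exact Or.inl (hmem j)
  | false => simpa using Or.inr (hmem j)

end AuxGrp

theorem membership_decidable_of_qi_embedding
    (G H : Type) [Group G] [Group H] (X : Finset G) (hX : Generates X)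
    (m : ℕ) (π : FreeGroup (Fin m) →* H) (hπ : Function.Surjective π)
    (Y : Finset H) (hY : (Y : Set H) = Set.range fun j : Fin m => π (FreeGroup.of j))
    (φ : G →* H) (hqi : IsQIEmbedding X Y φ)
    (hwp : DecidableWordProblemVia π) :
    DecidableMembership π φ := by
  classical
  obtain ⟨hinj, C, k, hC, hk, hqi2⟩ := hqi
  obtain ⟨f0, hf0, hp0⟩ := ComputablePred.computable_iff.mp hwp
  have hf0' : ∀ w : List (Fin m × Bool), π (FreeGroup.mk w) = 1 ↔ f0 w = true :=
    fun w => iff_of_eq (congrFun hp0 w)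
  -- choose words representing the images of the generators of `G`
  have hWex : ∃ W : List (List (Fin m × Bool)),
      (∀ b ∈ W, π (FreeGroup.mk b) ∈ φ.range) ∧
      (∀ a : G, (a ∈ X ∨ a⁻¹ ∈ X) → ∃ b ∈ W, π (FreeGroup.mk b) = φ a) := by
    have hwf : ∀ h : H, π (FreeGroup.mk ((Classical.choose (hπ h)).toWord)) = h := by
      intro h
      rw [FreeGroup.mk_toWord]
      exact Classical.choose_spec (hπ h)
    refine ⟨X.toList.flatMap fun a =>
      [(Classical.choose (hπ (φ a))).toWord, (Classical.choose (hπ ((φ a)⁻¹))).toWord],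
      ?_, ?_⟩
    · intro b hb
      obtain ⟨a, ha, hb⟩ := List.mem_flatMap.mp hb
      simp only [List.mem_cons, List.not_mem_nil, or_false] at hb
      rcases hb with rfl | rfl
      · rw [hwf]; exact ⟨a, rfl⟩
      · rw [hwf, ← map_inv]; exact ⟨a⁻¹, rfl⟩
    · intro a ha
      rcases ha with ha | ha
      · refine ⟨(Classical.choose (hπ (φ a))).toWord, ?_, hwf (φ a)⟩
        exact List.mem_flatMap.mpr ⟨a, Finset.mem_toList.mpr ha, by simp⟩
      · refine ⟨(Classical.choose (hπ ((φ a⁻¹)⁻¹))).toWord, ?_, ?_⟩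
        · exact List.mem_flatMap.mpr ⟨a⁻¹, Finset.mem_toList.mpr ha, by simp⟩
        · rw [hwf]; simp
  obtain ⟨W, hWrange, hWcover⟩ := hWex
  set N : ℕ → ℕ := fun n => ⌈C⌉₊ * (n + ⌈k⌉₊) with hN
  -- soundness of concatenations of blocks
  have h7 : ∀ bs : List (List (Fin m × Bool)), (∀ b ∈ bs, b ∈ W) →
      π (FreeGroup.mk bs.flatten) ∈ φ.range := by
    intro bs
    induction bs with
    | nil => intro _; simpa [← FreeGroup.one_eq_mk] using (φ.range).one_mem
    | cons b t iht =>
      intro hb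
      have hsplit : FreeGroup.mk (b :: t).flatten = FreeGroup.mk b * FreeGroup.mk t.flatten := by
        rw [FreeGroup.mul_mk]; rfl
      rw [hsplit, map_mul]
      exact Subgroup.mul_mem _ (hWrange b (hb b (by simp)))
        (iht fun x hx => hb x (by simp [hx]))
  -- the key equivalence
  have key : ∀ w : List (Fin m × Bool),
      (π (FreeGroup.mk w) ∈ φ.range ↔
        ∃ u ∈ blockConcats W (N w.length), π (FreeGroup.mk u) = π (FreeGroup.mk w)) := by
    intro w
    constructor
    · rintro ⟨g, hg⟩
      have h1 : wordLength Y (φ g) ≤ w.length := by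
        rw [hg]; exact wordLength_pi_le π Y hY w
      have h2 := (hqi2 g).1
      have h4 : wordLength X g ≤ N w.length := by
        have h1' : (wordLength Y (φ g) : ℝ) ≤ (w.length : ℝ) := by exact_mod_cast h1
        have e0 : (1 / C) * (wordLength X g : ℝ) ≤ (w.length : ℝ) + k := by linarith
        have e1 : (wordLength X g : ℝ) ≤ C * ((w.length : ℝ) + k) := by
          have := mul_le_mul_of_nonneg_left e0 hC.le
          rwa [show C * (1 / C * (wordLength X g : ℝ)) = (wordLength X g : ℝ) by
            field_simp] at this
        have hC1 : C ≤ (⌈C⌉₊ : ℝ) := Nat.le_ceil C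
        have hk1 : k ≤ (⌈k⌉₊ : ℝ) := Nat.le_ceil k
        have h0 : (0 : ℝ) ≤ (w.length : ℝ) + k := by positivity
        have e2 : C * ((w.length : ℝ) + k) ≤ (⌈C⌉₊ : ℝ) * ((w.length : ℝ) + (⌈k⌉₊ : ℝ)) := by
          calc C * ((w.length : ℝ) + k) ≤ (⌈C⌉₊ : ℝ) * ((w.length : ℝ) + k) :=
                mul_le_mul_of_nonneg_right hC1 h0
            _ ≤ (⌈C⌉₊ : ℝ) * ((w.length : ℝ) + (⌈k⌉₊ : ℝ)) :=
                mul_le_mul_of_nonneg_left (by linarith) (Nat.cast_nonneg _)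
        have : (wordLength X g : ℝ) ≤ ((N w.length : ℕ) : ℝ) := by
          rw [hN]; push_cast; linarith
        exact_mod_cast this
      obtain ⟨L, hLlen, hLmem, hLprod⟩ := wordLength_spec hX g
      have h6 : ∀ Lst : List G, (∀ a ∈ Lst, a ∈ X ∨ a⁻¹ ∈ X) →
          ∃ bs : List (List (Fin m × Bool)), bs.length = Lst.length ∧ (∀ b ∈ bs, b ∈ W) ∧
            π (FreeGroup.mk bs.flatten) = φ Lst.prod := by
        intro Lst
        induction Lst with
        | nil => exact fun _ => ⟨[], rfl, by simp, by simp [← FreeGroup.one_eq_mk]⟩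
        | cons a t iht =>
          intro hmem
          obtain ⟨bs, hb1, hb2, hb3⟩ := iht fun x hx => hmem x (by simp [hx])
          obtain ⟨b, hbW, hbval⟩ := hWcover a (hmem a (by simp))
          refine ⟨b :: bs, by simp [hb1], ?_, ?_⟩
          · intro x hx
            rcases List.mem_cons.mp hx with rfl | hx
            · exact hbW
            · exact hb2 x hx
          · have hsplit : FreeGroup.mk (b :: bs).flatten
                = FreeGroup.mk b * FreeGroup.mk bs.flatten := by
              rw [FreeGroup.mul_mk]; rfl
            rw [hsplit, map_mul, hbval, hb3, List.prod_cons, map_mul]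
      obtain ⟨bs, hb1, hb2, hb3⟩ := h6 L hLmem
      refine ⟨bs.flatten, (mem_blockConcats W _ _).mpr ⟨bs, ?_, hb2, rfl⟩, ?_⟩
      · rw [hb1, hLlen]; exact h4
      · rw [hb3, hLprod, hg]
    · rintro ⟨u, hu, hequ⟩
      rw [← hequ]
      obtain ⟨bs, -, hb2, rfl⟩ := (mem_blockConcats W _ _).mp hu
      exact h7 bs hb2
  -- the decision procedure
  set F : List (Fin m × Bool) → Bool :=
    fun w => ((blockConcats W (N w.length)).map fun u => FreeGroup.invRev u ++ w).any f0
    with hF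
  have hFcomp : Computable F := by
    have hNpr : Primrec N :=
      Primrec.nat_mul.comp (Primrec.const ⌈C⌉₊)
        (Primrec.nat_add.comp Primrec.id (Primrec.const ⌈k⌉₊))
    have hinv : Primrec (FreeGroup.invRev : List (Fin m × Bool) → List (Fin m × Bool)) := by
      have : Primrec fun l : List (Fin m × Bool) =>
          (l.map fun p : Fin m × Bool => (p.1, !p.2)).reverse :=
        Primrec.list_reverse.comp (Primrec.list_map Primrec.id
          (Primrec.pair (Primrec.fst.comp Primrec.snd)
            (Primrec.not.comp (Primrec.snd.comp Primrec.snd))).to₂)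
      exact this.of_eq fun l => by simp [FreeGroup.invRev]
    have hinner : Primrec fun w : List (Fin m × Bool) =>
        (blockConcats W (N w.length)).map fun u => FreeGroup.invRev u ++ w := by
      refine Primrec.list_map
        ((blockConcats_primrec W).comp (hNpr.comp Primrec.list_length)) ?_
      exact (Primrec.list_append.comp (hinv.comp Primrec.snd) Primrec.fst).to₂
    exact (computable_list_any hf0).comp hinner.to_comp
  have hsplit : ∀ u w : List (Fin m × Bool),
      π (FreeGroup.mk (FreeGroup.invRev u ++ w))
        = (π (FreeGroup.mk u))⁻¹ * π (FreeGroup.mk w) := by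
    intro u w
    rw [← FreeGroup.mul_mk, ← FreeGroup.inv_mk, map_mul, map_inv]
  have hFcorrect : ∀ w, (π (FreeGroup.mk w) ∈ φ.range) ↔ F w = true := by
    intro w
    rw [key w, hF]
    simp only [List.any_eq_true, List.mem_map]
    constructor
    · rintro ⟨u, hu, hval⟩
      refine ⟨FreeGroup.invRev u ++ w, ⟨u, hu, rfl⟩, ?_⟩
      rw [← hf0', hsplit, hval, inv_mul_cancel]
    · rintro ⟨x, ⟨u, hu, rfl⟩, hval⟩
      rw [← hf0', hsplit] at hval
      exact ⟨u, hu, inv_mul_eq_one.mp hval⟩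
  exact ComputablePred.computable_iff.mpr
    ⟨F, hFcomp, funext fun w => propext (hFcorrect w)⟩
end

section
/- Let H be a finitely generated group with a surjection π from the free group on a finite set Y onto H and a computable left order ≤, let G be a countable group with an enumerated generating sequence x : ℕ → G, and let φ : G → H be a computable embedding. Then the left-invariant linear order on G obtained by pulling back ≤ along φ is computable with respect to x. -/
/-! Replacing each letter `x_i^{±1}` by the computed word for `φ (x_i)^{±1}` turns a word over
`x` into a word over `Y` representing the image of its value under `φ`. Since the order on `G`
is pulled back along `φ`, the sign of an element of `G` is the sign of its image, which the
computable order on `H` decides. -/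

namespace Computable

variable {α β σ : Type*} [Primcodable α] [Primcodable β] [Primcodable σ]

theorem list_foldl {f : α → List β} {g : α → σ} {h : α → σ × β → σ} (hf : Computable f)
    (hg : Computable g) (hh : Computable₂ h) :
    Computable fun a => (f a).foldl (fun s b => h a (s, b)) (g a) := by
  have hstep : Computable₂ fun a (p : ℕ × σ) =>
      Option.casesOn (motive := fun _ => σ) (f a)[p.1]? p.2 fun b => h a (p.2, b) :=
    (option_casesOn (list_getElem?.comp (hf.comp fst) (fst.comp snd)) (snd.comp snd)
      (hh.comp (fst.comp fst) (pair (snd.comp (snd.comp fst)) snd)).to₂).to₂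
  refine (nat_rec (list_length.comp hf) hg hstep).of_eq fun a => ?_
  suffices ∀ n, Nat.rec (motive := fun _ => σ) (g a)
      (fun n s => Option.casesOn (motive := fun _ => σ) (f a)[n]? s fun b => h a (s, b)) n =
      ((f a).take n).foldl (fun s b => h a (s, b)) (g a) by
    rw [this, List.take_length]
  intro n
  induction n with
  | zero => simp
  | succ n ih =>
    simp only [List.take_add_one, List.foldl_append, ← ih]
    cases (f a)[n]? <;> rfl

theorem list_flatMap {f : α → List β} {g : α → β → List σ} (hf : Computable f)
    (hg : Computable₂ g) : Computable fun a => (f a).flatMap (g a) := by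
  have happend : ∀ (l : List β) (s : List σ) (a : α),
      l.foldl (fun s b => s ++ g a b) s = s ++ l.flatMap (g a) := by
    intro l
    induction l with
    | nil => simp
    | cons b l ih => simp [ih]
  have hstep : Computable₂ fun a (p : List σ × β) => p.1 ++ g a p.2 :=
    (list_append.comp (fst.comp snd) (hg.comp fst (snd.comp snd))).to₂
  exact (list_foldl hf (const []) hstep).of_eq fun a => by
    simp only [happend, List.nil_append]

end Computable

theorem FreeGroup.computable_invRev {α : Type*} [Primcodable α] :
    Computable (FreeGroup.invRev : List (α × Bool) → List (α × Bool)) :=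
  have : Primrec fun L : List (α × Bool) => (L.map fun p => (p.1, !p.2)).reverse :=
    Primrec.list_reverse.comp (Primrec.list_map Primrec.id
      (Primrec.pair (Primrec.fst.comp Primrec.snd)
        (Primrec.not.comp (Primrec.snd.comp Primrec.snd))))
  this.to_comp.of_eq fun L => by simp [FreeGroup.invRev]

def substituteWord {α : Type*} (f : ℕ → List (α × Bool)) (w : List (ℕ × Bool)) :
    List (α × Bool) :=
  w.flatMap fun p => cond p.2 (f p.1) (FreeGroup.invRev (f p.1))

open Computable in
theorem computable_substituteWord {α : Type*} [Primcodable α] {f : ℕ → List (α × Bool)}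
    (hf : Computable f) : Computable (substituteWord f) :=
  list_flatMap Computable.id (cond (snd.comp snd) (hf.comp (fst.comp snd))
    (FreeGroup.computable_invRev.comp (hf.comp (fst.comp snd)))).to₂

theorem evalWord_cons {G : Type*} [Group G] (x : ℕ → G) (p : ℕ × Bool) (w : List (ℕ × Bool)) :
    evalWord x (p :: w) = cond p.2 (x p.1) (x p.1)⁻¹ * evalWord x w := by
  obtain ⟨i, _ | _⟩ := p <;> simp [evalWord]

theorem MonoidHom.map_evalWord {G H : Type*} [Group G] [Group H] (φ : G →* H) (x : ℕ → G)
    (w : List (ℕ × Bool)) : φ (evalWord x w) = evalWord (φ ∘ x) w := by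
  induction w with
  | nil => simp [evalWord]
  | cons p w ih => cases h : p.2 <;> simp [evalWord_cons, ih, h]

theorem mk_substituteWord {α : Type*} (f : ℕ → List (α × Bool)) (w : List (ℕ × Bool)) :
    FreeGroup.mk (substituteWord f w) = evalWord (fun i => FreeGroup.mk (f i)) w := by
  induction w with
  | nil => rfl
  | cons p w ih =>
    rw [evalWord_cons, ← ih, substituteWord, List.flatMap_cons, ← FreeGroup.mul_mk]
    cases p.2 <;> simp [substituteWord, FreeGroup.inv_mk]

theorem orderSign_eq_of_le_iff {G H : Type*} [Group G] [Group H] (lG : LinearOrder G)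
    (lH : LinearOrder H) (φ : G →* H) (hφ : ∀ a b : G, lG.le a b ↔ lH.le (φ a) (φ b)) (a : G) :
    orderSign lG a = orderSign lH (φ a) := by
  have hlt : lG.lt a 1 ↔ lH.lt (φ a) 1 := by
    rw [lG.lt_iff_le_not_ge, lH.lt_iff_le_not_ge, hφ, hφ, map_one]
  have heq : a = 1 ↔ φ a = 1 := by
    rw [@le_antisymm_iff G lG.toPartialOrder, @le_antisymm_iff H lH.toPartialOrder, hφ, hφ,
      map_one]
  simp only [orderSign, hlt, heq]

theorem pullback_order_computable_of_computable_embedding_general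
    (H : Type) [Group H] (m : ℕ) (π : FreeGroup (Fin m) →* H)
    (l : LinearOrder H)
    (hlc : Computable (fun w : List (Fin m × Bool) => orderSign l (π (FreeGroup.mk w))))
    (G : Type) [Group G] (x : ℕ → G)
    (φ : G →* H) (hce : ComputableEmbedding x π φ)
    (lG : LinearOrder G) (hpull : ∀ a b : G, lG.le a b ↔ l.le (φ a) (φ b)) :
    Computable (fun w : List (ℕ × Bool) => orderSign lG (evalWord x w)) := by
  obtain ⟨f, hf, hfx⟩ := hce
  have hsubst : ∀ w, π (FreeGroup.mk (substituteWord f w)) = φ (evalWord x w) := by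
    intro w
    rw [mk_substituteWord, π.map_evalWord, φ.map_evalWord]
    exact congrArg (evalWord · w) (funext hfx)
  exact (hlc.comp (computable_substituteWord hf)).of_eq fun w => by
    rw [hsubst, orderSign_eq_of_le_iff lG l φ hpull]

theorem pullback_order_computable_of_computable_embedding
    (H : Type) [Group H] (m : ℕ) (π : FreeGroup (Fin m) →* H)
    (hπ : Function.Surjective π) (l : LinearOrder H)
    (hl : ∀ a b c : H, l.le b c → l.le (a * b) (a * c))
    (hlc : Computable (fun w : List (Fin m × Bool) => orderSign l (π (FreeGroup.mk w))))
    (G : Type) [Group G] (x : ℕ → G) (hx : Subgroup.closure (Set.range x) = ⊤)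
    (φ : G →* H) (hφ : Function.Injective φ) (hce : ComputableEmbedding x π φ)
    (lG : LinearOrder G) (hpull : ∀ a b : G, lG.le a b ↔ l.le (φ a) (φ b)) :
    Computable (fun w : List (ℕ × Bool) => orderSign lG (evalWord x w)) :=
  pullback_order_computable_of_computable_embedding_general H m π l hlc G x φ hce lG hpull
end
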